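/- arXiv:2501.01288 — 2 statements merged into one kernel-verified Lean document; each statement's English description precedes it below -/
import Mathlib

section
/- Let n ≥ 5 be odd and define in Sym(2n): t₁ = ∏_{j=2}^{n} (j, n+j) and tᵢ = (i−1,i)(n+i−1,n+i) for 2 ≤ i ≤ n. Then ⟨t₁,…,t_n⟩ equals the subgroup generated by β₀=(1,n+1)(2,n+2) and βᵢ=(i,i+1)(n+i,n+i+1), 1 ≤ i ≤ n−1; in particular ⟨t₁,…,t_n⟩ ≅ D_n. -/
lemma swap_commute {a b c d : ℕ} (h1 : a ≠ c) (h2 : a ≠ d) (h3 : b ≠ c) (h4 : b ≠ d) :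
    Commute (Equiv.swap a b) (Equiv.swap c d) := by
  apply Equiv.ext
  intro x
  simp only [Equiv.Perm.mul_apply, Equiv.swap_apply_def]
  split_ifs <;> omega

def LL (n m a : ℕ) : Equiv.Perm ℕ :=
  ((List.range m).map fun j => Equiv.swap (j + a) (n + (j + a))).prod

lemma LL_succ (n m a : ℕ) :
    LL n (m+1) a = LL n m a * Equiv.swap (m + a) (n + (m + a)) := by
  unfold LL
  rw [List.range_succ, List.map_append, List.prod_append]
  simp

lemma LL_cons (n m a : ℕ) :
    LL n (m+1) a = Equiv.swap a (n + a) * LL n m (a+1) := by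
  unfold LL
  rw [List.range_succ_eq_map]
  simp only [List.map_cons, List.map_map, List.prod_cons, Nat.zero_add]
  congr 1
  congr 1
  refine List.map_congr_left fun j _ => ?_
  simp only [Function.comp]
  congr 1 <;> omega

lemma commute_LL {n m a c d : ℕ}
    (h : ∀ j, a ≤ j → j < a + m → c ≠ j ∧ c ≠ n + j ∧ d ≠ j ∧ d ≠ n + j) :
    Commute (Equiv.swap c d) (LL n m a) := by
  induction m with
  | zero =>
      simp only [LL, List.range_zero, List.map_nil, List.prod_nil]
      exact Commute.one_right _
  | succ m ih =>
    rw [LL_succ]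
    have hj := h (m + a) (by omega) (by omega)
    exact (ih fun j h1 h2 => h j h1 (by omega)).mul_right
      (swap_commute hj.1 (by omega) hj.2.2.1 (by omega))

lemma LL_sq {n m a : ℕ} (ha : 1 ≤ a) (ham : a + m ≤ n + 1) :
    LL n m a * LL n m a = 1 := by
  induction m with
  | zero => simp [LL]
  | succ m ih =>
    rw [LL_succ]
    have hc : Commute (Equiv.swap (m + a) (n + (m + a))) (LL n m a) :=
      commute_LL (fun j h1 h2 => by omega)
    rw [hc.mul_mul_mul_comm, ih (by omega), Equiv.swap_mul_self, one_mul]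

/-- `t₁ = ∏_{j=2}^{n}(j, n+j)` and `tᵢ = (i-1, i)(n+i-1, n+i)` for `2 ≤ i ≤ n`, in `Sym(2n)`. -/
def t (n i : ℕ) : Equiv.Perm ℕ :=
  if i = 1 then ((List.range (n - 1)).map fun j => Equiv.swap (j + 2) (n + (j + 2))).prod
  else Equiv.swap (i - 1) i * Equiv.swap (n + i - 1) (n + i)

/-- `βᵢ` generators of the standard copy of the Coxeter group `Dₙ` inside `Sym(2n)`
(realized as permutations of `ℕ`, moving only points in `{1,…,2n}`). -/
def beta (n i : ℕ) : Equiv.Perm ℕ :=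
  if i = 0 then Equiv.swap 1 (n + 1) * Equiv.swap 2 (n + 2)
  else Equiv.swap i (i + 1) * Equiv.swap (n + i) (n + i + 1)

/-- The standard copy of the Coxeter group `Dₙ` in `Sym(2n)`, generated by `β₀,…,β_{n-1}`. -/
def Dn (n : ℕ) : Subgroup (Equiv.Perm ℕ) :=
  Subgroup.closure {g | ∃ i < n, g = beta n i}

lemma beta_mem {n i : ℕ} (hi : i < n) : beta n i ∈ Dn n :=
  Subgroup.subset_closure ⟨i, hi, rfl⟩

set_option maxHeartbeats 1000000 in
lemma ff_mem {n i : ℕ} (h5 : 5 ≤ n) (hi : 1 ≤ i) (hin : i + 1 ≤ n) :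
    Equiv.swap i (n + i) * Equiv.swap (i+1) (n + (i+1)) ∈ Dn n := by
  induction i, hi using Nat.le_induction with
  | base =>
    have : beta n 0 = Equiv.swap 1 (n + 1) * Equiv.swap (1+1) (n + (1+1)) := by
      simp [beta]
    rw [← this]; exact beta_mem (by omega)
  | succ i hi ih =>
    have hσ : beta n i * beta n (i+1) ∈ Dn n :=
      mul_mem (beta_mem (by omega)) (beta_mem (by omega))
    set σ := beta n i * beta n (i+1) with hσd
    have e1 : σ i = i + 1 := by
      simp only [hσd, beta, if_neg (by omega : ¬ i = 0), if_neg (by omega : ¬ i + 1 = 0),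
        Equiv.Perm.mul_apply, Equiv.swap_apply_def]
      split_ifs <;> omega
    have e2 : σ (n + i) = n + (i + 1) := by
      simp only [hσd, beta, if_neg (by omega : ¬ i = 0), if_neg (by omega : ¬ i + 1 = 0),
        Equiv.Perm.mul_apply, Equiv.swap_apply_def]
      split_ifs <;> omega
    have e3 : σ (i + 1) = i + 1 + 1 := by
      simp only [hσd, beta, if_neg (by omega : ¬ i = 0), if_neg (by omega : ¬ i + 1 = 0),
        Equiv.Perm.mul_apply, Equiv.swap_apply_def]
      split_ifs <;> omega
    have e4 : σ (n + (i + 1)) = n + (i + 1 + 1) := by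
      simp only [hσd, beta, if_neg (by omega : ¬ i = 0), if_neg (by omega : ¬ i + 1 = 0),
        Equiv.Perm.mul_apply, Equiv.swap_apply_def]
      split_ifs <;> omega
    have key : Equiv.swap (i+1) (n + (i+1)) * Equiv.swap (i+1+1) (n + (i+1+1))
        = σ * (Equiv.swap i (n + i) * Equiv.swap (i+1) (n + (i+1))) * σ⁻¹ := by
      rw [show σ * (Equiv.swap i (n + i) * Equiv.swap (i+1) (n + (i+1))) * σ⁻¹
          = (σ * Equiv.swap i (n + i) * σ⁻¹) * (σ * Equiv.swap (i+1) (n + (i+1)) * σ⁻¹) by group,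
        ← Equiv.swap_apply_apply, ← Equiv.swap_apply_apply, e1, e2, e3, e4]
    rw [key]
    exact mul_mem (mul_mem hσ (ih (by omega))) (inv_mem hσ)

lemma L2_mem {n : ℕ} (h5 : 5 ≤ n) : ∀ k, 2*k + 1 ≤ n → LL n (2*k) 2 ∈ Dn n := by
  intro k
  induction k with
  | zero => intro _; simp only [Nat.mul_zero, LL, List.range_zero, List.map_nil, List.prod_nil]
            exact one_mem _
  | succ k ih =>
    intro hk
    have e : 2 * (k+1) = (2*k + 1) + 1 := by omega
    rw [e, LL_succ, LL_succ, mul_assoc]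
    have e2 : 2*k + 1 + 2 = (2*k+2) + 1 := by omega
    have e3 : (2:ℕ)*k + 2 = 2*k + 2 := rfl
    rw [e2]
    exact mul_mem (ih (by omega)) (ff_mem h5 (by omega) (by omega))

lemma t_one_eq (n : ℕ) : t n 1 = LL n (n-1) 2 := rfl

lemma t1_mem {n : ℕ} (h5 : 5 ≤ n) (hodd : Odd n) : t n 1 ∈ Dn n := by
  obtain ⟨k, hk⟩ := hodd
  rw [t_one_eq, show n - 1 = 2*k by omega]
  exact L2_mem h5 k (by omega)

lemma t_beta {n i : ℕ} (hi : 1 ≤ i) : t n (i + 1) = beta n i := by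
  unfold t beta
  rw [if_neg (by omega), if_neg (by omega), Nat.add_sub_cancel,
    show n + (i + 1) - 1 = n + i by omega]
  rfl

lemma beta_one_eq (n : ℕ) : beta n 1 = Equiv.swap 1 2 * Equiv.swap (n+1) (n+2) := rfl

set_option maxHeartbeats 1000000 in
lemma beta0_eq {n : ℕ} (h5 : 5 ≤ n) :
    beta n 0 = t n 1 * (beta n 1 * (t n 1 * beta n 1)) := by
  set s1 := Equiv.swap 1 (n+1) with hs1
  set s2 := Equiv.swap 2 (n+2) with hs2
  set b := beta n 1 with hb
  set P := LL n (n-2) 3 with hP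
  have ht1 : t n 1 = s2 * P := by
    rw [t_one_eq, show n - 1 = (n-2) + 1 by omega, LL_cons]
  have hbb : b * b = 1 := by
    rw [hb, beta_one_eq]
    rw [(swap_commute (a := n+1) (b := n+2) (c := 1) (d := 2) (by omega) (by omega) (by omega)
      (by omega)).mul_mul_mul_comm, Equiv.swap_mul_self, Equiv.swap_mul_self, one_mul]
  have hbinv : b⁻¹ = b := inv_eq_of_mul_eq_one_right hbb
  have e1 : b 2 = 1 := by
    simp only [hb, beta_one_eq, Equiv.Perm.mul_apply, Equiv.swap_apply_def]
    split_ifs <;> omega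
  have e2 : b (n + 2) = n + 1 := by
    simp only [hb, beta_one_eq, Equiv.Perm.mul_apply, Equiv.swap_apply_def]
    split_ifs <;> omega
  have hbs2 : b * s2 = s1 * b := by
    have h := Equiv.swap_apply_apply b 2 (n+2)
    rw [e1, e2, hbinv] at h
    calc b * s2 = (b * s2 * b) * b := by rw [mul_assoc, hbb, mul_one]
    _ = s1 * b := by rw [← h]
  have hCbP : Commute b P := by
    rw [hb, beta_one_eq]
    exact ((commute_LL (fun j h1 h2 => by omega)).mul_left
      (commute_LL (fun j h1 h2 => by omega)))
  have hCs1P : Commute s1 P := commute_LL (fun j h1 h2 => by omega)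
  have hPP : P * P = 1 := LL_sq (by omega) (by omega)
  have m1 : ∀ X : Equiv.Perm ℕ, b * (s2 * X) = s1 * (b * X) := fun X => by
    rw [← mul_assoc, hbs2, mul_assoc]
  have m2 : ∀ X : Equiv.Perm ℕ, b * (P * X) = P * (b * X) := fun X => by
    rw [← mul_assoc, hCbP.eq, mul_assoc]
  have m3 : ∀ X : Equiv.Perm ℕ, P * (s1 * X) = s1 * (P * X) := fun X => by
    rw [← mul_assoc, ← hCs1P.eq, mul_assoc]
  have m4 : b * (P * b) = P := by rw [m2, hbb, mul_one]
  rw [ht1]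
  simp only [mul_assoc]
  rw [m1, m4, m3, hPP, mul_one]
  show beta n 0 = s2 * s1
  rw [show beta n 0 = s1 * s2 from rfl,
    (swap_commute (a := 1) (b := n+1) (c := 2) (d := n+2) (by omega) (by omega) (by omega)
      (by omega)).eq]

/-- For odd `n ≥ 5`, `⟨t₁,…,tₙ⟩` equals `⟨β₀,…,β_{n-1}⟩`, the standard copy of `Dₙ`. -/
theorem stmt5 (n : ℕ) (hn : 5 ≤ n) (hodd : Odd n) :
    Subgroup.closure {g | ∃ i, 1 ≤ i ∧ i ≤ n ∧ g = t n i} = Dn n := by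
  apply le_antisymm
  · rw [Subgroup.closure_le]
    rintro g ⟨i, hi1, hin, rfl⟩
    by_cases hone : i = 1
    · subst hone; exact t1_mem hn hodd
    · have h2 : 2 ≤ i := by omega
      rw [show i = (i - 1) + 1 by omega, t_beta (by omega)]
      exact beta_mem (by omega)
  · show Subgroup.closure _ ≤ _
    rw [Subgroup.closure_le]
    rintro g ⟨i, hin, rfl⟩
    have ht : ∀ j, 1 ≤ j → j ≤ n → t n j ∈ Subgroup.closure {g | ∃ i, 1 ≤ i ∧ i ≤ n ∧ g = t n i} :=
      fun j h1 h2 => Subgroup.subset_closure ⟨j, h1, h2, rfl⟩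
    by_cases hzero : i = 0
    · subst hzero
      rw [beta0_eq hn, ← t_beta (i := 1) le_rfl]
      exact mul_mem (ht 1 (by omega) (by omega)) (mul_mem (ht 2 (by omega) (by omega))
        (mul_mem (ht 1 (by omega) (by omega)) (ht 2 (by omega) (by omega))))
    · rw [← t_beta (by omega : 1 ≤ i)]
      exact ht (i+1) (by omega) (by omega)
end

section
/- Let (G, {s₁,…,s_r}) be a string group generated by involutions such that G_{1,…,r−1} and G_{2,…,r} are string C-groups, s_r ∉ G_{1,…,r−1}, and G_{2,…,r−1} is a maximal subgroup of G_{2,…,r}. Then (G, {s₁,…,s_r}) is a string C-group. -/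
/-- For a tuple `s : Fin r → G` and `J ⊆ {1,…,r}`, the subgroup `G_J = ⟨sⱼ : j ∈ J⟩`. -/
def subJ {G : Type*} [Group G] {r : ℕ} (s : Fin r → G) (J : Set (Fin r)) : Subgroup G :=
  Subgroup.closure (s '' J)

/-- The intersection property `G_J ⊓ G_K = G_{J ∩ K}` holds for all subsets `J, K` of `A`;
`IsCOn s Set.univ` says that `(⟨s⟩, s)` is a string C-group provided `s` is a string
group generated by involutions. -/
def IsCOn {G : Type*} [Group G] {r : ℕ} (s : Fin r → G) (A : Set (Fin r)) : Prop :=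
  ∀ J ⊆ A, ∀ K ⊆ A, subJ s J ⊓ subJ s K = subJ s (J ∩ K)


/-!
Write `F = {1,…,r-1}` and `V = {2,…,r}` (in the code, indices start at `0`). Maximality of
`G_{F ∩ V}` in `G_V` gives `G_F ∩ G_V = G_{F ∩ V}`: otherwise `G_V ≤ G_F`, putting `s_r` in
`G_F`. The intersection property for all pairs `J, K` reduces, by removing the indices outside
`K` one at a time, to the pairs `J, {k}ᶜ`. If `k' ∉ J`, the string condition makes `G_J` the
commuting product `G_{J<k'} G_{J>k'}`. When `g ∈ G_J ∩ G_L` and one factor already lies in `G_L`,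
so does the other, and the question moves to that factor, whose index set lies in `F` or in `V`.
Applied with `L = F` and `L = V`, `G_F ∩ G_V = G_{F ∩ V}` and the C-group property of `F` and
`V` give `G_J ∩ G_F = G_{J ∩ F}` and `G_J ∩ G_V = G_{J ∩ V}` for every `J`; applied with
`L = {k}ᶜ` these settle the pairs `J, {k}ᶜ`.
-/

open Set

section IntersectionProperty

variable {G : Type*} [Group G] {r : ℕ} {s : Fin r → G} {J K S X Y : Set (Fin r)}

def IsCPair (s : Fin r → G) (J K : Set (Fin r)) : Prop :=
  subJ s J ⊓ subJ s K = subJ s (J ∩ K)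

theorem subJ_mono (h : J ⊆ K) : subJ s J ≤ subJ s K :=
  Subgroup.closure_mono (image_mono h)

theorem subJ_inter_le_inf : subJ s (J ∩ K) ≤ subJ s J ⊓ subJ s K :=
  le_inf (subJ_mono inter_subset_left) (subJ_mono inter_subset_right)

theorem isCPair_of_le (h : subJ s J ⊓ subJ s K ≤ subJ s (J ∩ K)) : IsCPair s J K :=
  h.antisymm subJ_inter_le_inf

theorem isCPair_of_subset (h : J ⊆ K) : IsCPair s J K := by
  rw [IsCPair, inf_eq_left.2 (subJ_mono h), inter_eq_self_of_subset_left h]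

theorem IsCPair.symm (h : IsCPair s J K) : IsCPair s K J := by
  rwa [IsCPair, inf_comm, inter_comm]

theorem IsCPair.inter_right {A B : Set (Fin r)} (hJA : IsCPair s J A) (hAB : IsCPair s A B)
    (h : IsCPair s (J ∩ A) B) : IsCPair s J (A ∩ B) := by
  rw [IsCPair, ← hAB, ← inf_assoc, hJA, h, inter_assoc]

theorem IsCPair.of_subset_of_isCOn (hS : IsCOn s S) (hSJ : IsCPair s S J) (hK : K ⊆ S) :
    IsCPair s K J := by
  calc subJ s K ⊓ subJ s J = subJ s K ⊓ (subJ s S ⊓ subJ s J) := by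
        rw [← inf_assoc, inf_eq_left.2 (subJ_mono hK)]
    _ = subJ s (K ∩ J) := by
        rw [hSJ, hS K hK _ inter_subset_left, ← inter_assoc, inter_eq_self_of_subset_left hK]

theorem exists_mul_eq_of_mem_subJ_union (hXY : ∀ i ∈ X, ∀ j ∈ Y, Commute (s i) (s j))
    {g : G} (hg : g ∈ subJ s (X ∪ Y)) : ∃ x ∈ subJ s X, ∃ y ∈ subJ s Y, x * y = g := by
  have hle : subJ s X ≤ Subgroup.centralizer (subJ s Y : Set G) := by
    rw [subJ, subJ, Subgroup.centralizer_closure, Subgroup.closure_le]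
    rintro _ ⟨i, hi, rfl⟩
    rw [SetLike.mem_coe, Subgroup.mem_centralizer_iff]
    rintro _ ⟨j, hj, rfl⟩
    exact (hXY i hi j hj).eq.symm
  have hsup : subJ s (X ∪ Y) = subJ s X ⊔ subJ s Y := by
    rw [subJ, image_union, Subgroup.closure_union]
    rfl
  rw [← SetLike.mem_coe, hsup, Subgroup.coe_mul_of_left_le_normalizer_right _ _
    (hle.trans (Subgroup.centralizer_le_normalizer _))] at hg
  exact hg

theorem IsCPair.union_left (hXY : ∀ i ∈ X, ∀ j ∈ Y, Commute (s i) (s j))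
    (hX : IsCPair s X S) (hY : Y ⊆ S) : IsCPair s (X ∪ Y) S := by
  refine isCPair_of_le fun g hg => ?_
  obtain ⟨hgXY, hgS⟩ := Subgroup.mem_inf.1 hg
  obtain ⟨x, hx, y, hy, rfl⟩ := exists_mul_eq_of_mem_subJ_union hXY hgXY
  have hyS : y ∈ subJ s S := subJ_mono hY hy
  have hxS : x ∈ subJ s (X ∩ S) :=
    le_of_eq hX (Subgroup.mem_inf.2 ⟨hx, by simpa using mul_mem hgS (inv_mem hyS)⟩)
  exact mul_mem (subJ_mono (inter_subset_inter_left _ subset_union_left) hxS)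
    (subJ_mono (subset_inter subset_union_right hY) hy)

theorem isCPair_of_forall_notMem (h : ∀ k, k ∉ J → IsCPair s J S) : IsCPair s J S := by
  by_cases hJ : J = univ
  · subst hJ
    exact (isCPair_of_subset (subset_univ S)).symm
  · obtain ⟨k, hk⟩ := (ne_univ_iff_exists_notMem J).1 hJ
    exact h k hk

theorem isCOn_univ_of_forall_isCPair_compl_singleton (h : ∀ J (k : Fin r), IsCPair s J {k}ᶜ) :
    IsCOn s univ := by
  have hcompl : ∀ D : Set (Fin r), D.Finite → ∀ J, IsCPair s J Dᶜ := by
    intro D hD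
    induction D, hD using Set.Finite.induction_on with
    | empty => exact fun J => by simpa using isCPair_of_subset (subset_univ J)
    | insert _ _ ih =>
      intro J
      rw [insert_eq, compl_union]
      exact (h J _).inter_right (ih _) (ih _)
  intro J _ K _
  have hK := hcompl Kᶜ (toFinite _) J
  rwa [compl_compl] at hK

end IntersectionProperty

section StringGroup

variable {G : Type*} [Group G] {r : ℕ} {s : Fin r → G} {J S : Set (Fin r)} {k : Fin r}

theorem inter_Iio_union_inter_Ioi (hk : k ∉ J) : J ∩ Iio k ∪ J ∩ Ioi k = J := by
  rw [← inter_union_distrib_left, Iio_union_Ioi,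
    inter_eq_left.2 (subset_compl_singleton_iff.2 hk)]

theorem commute_of_mem_Iio_of_mem_Ioi
    (hcomm : ∀ i j : Fin r, (i : ℕ) + 2 ≤ j → Commute (s i) (s j)) :
    ∀ i ∈ J ∩ Iio k, ∀ j ∈ J ∩ Ioi k, Commute (s i) (s j) := by
  rintro i ⟨-, hi⟩ j ⟨-, hj⟩
  exact hcomm i j (by have : (i : ℕ) < k := hi; have : (k : ℕ) < j := hj; omega)

theorem IsCPair.of_notMem_of_inter_Iio_subset
    (hcomm : ∀ i j : Fin r, (i : ℕ) + 2 ≤ j → Commute (s i) (s j)) (hk : k ∉ J)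
    (hlow : J ∩ Iio k ⊆ S) (hhigh : IsCPair s (J ∩ Ioi k) S) : IsCPair s J S := by
  have h := hhigh.union_left
    (fun j hj i hi => (commute_of_mem_Iio_of_mem_Ioi hcomm i hi j hj).symm) hlow
  rwa [union_comm, inter_Iio_union_inter_Ioi hk] at h

theorem IsCPair.of_notMem_of_inter_Ioi_subset
    (hcomm : ∀ i j : Fin r, (i : ℕ) + 2 ≤ j → Commute (s i) (s j)) (hk : k ∉ J)
    (hhigh : J ∩ Ioi k ⊆ S) (hlow : IsCPair s (J ∩ Iio k) S) : IsCPair s J S := by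
  have h := hlow.union_left (commute_of_mem_Iio_of_mem_Ioi hcomm) hhigh
  rwa [inter_Iio_union_inter_Ioi hk] at h

theorem Iio_subset_allButLast (k : Fin r) : Iio k ⊆ {i : Fin r | (i : ℕ) + 1 < r} :=
  fun i hi => by have : (i : ℕ) < k := hi; have := k.isLt; simp only [mem_ofPred_eq]; omega

theorem Ioi_subset_allButFirst (k : Fin r) : Ioi k ⊆ {i : Fin r | 0 < (i : ℕ)} :=
  fun i hi => by have : (k : ℕ) < i := hi; simp only [mem_ofPred_eq]; omega

theorem isCPair_allButLast (hcomm : ∀ i j : Fin r, (i : ℕ) + 2 ≤ j → Commute (s i) (s j))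
    (h2 : IsCOn s {i | 0 < (i : ℕ)})
    (hFV : IsCPair s {i | (i : ℕ) + 1 < r} {i | 0 < (i : ℕ)}) (J : Set (Fin r)) :
    IsCPair s J {i | (i : ℕ) + 1 < r} :=
  isCPair_of_forall_notMem fun k hk =>
    .of_notMem_of_inter_Iio_subset hcomm hk (inter_subset_right.trans (Iio_subset_allButLast k))
      (hFV.symm.of_subset_of_isCOn h2 (inter_subset_right.trans (Ioi_subset_allButFirst k)))

theorem isCPair_allButFirst (hcomm : ∀ i j : Fin r, (i : ℕ) + 2 ≤ j → Commute (s i) (s j))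
    (h1 : IsCOn s {i | (i : ℕ) + 1 < r})
    (hFV : IsCPair s {i | (i : ℕ) + 1 < r} {i | 0 < (i : ℕ)}) (J : Set (Fin r)) :
    IsCPair s J {i | 0 < (i : ℕ)} :=
  isCPair_of_forall_notMem fun k hk =>
    .of_notMem_of_inter_Ioi_subset hcomm hk (inter_subset_right.trans (Ioi_subset_allButFirst k))
      (hFV.of_subset_of_isCOn h1 (inter_subset_right.trans (Iio_subset_allButLast k)))

theorem isCPair_compl_singleton (hcomm : ∀ i j : Fin r, (i : ℕ) + 2 ≤ j → Commute (s i) (s j))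
    (h1 : IsCOn s {i | (i : ℕ) + 1 < r}) (h2 : IsCOn s {i | 0 < (i : ℕ)})
    (hFV : IsCPair s {i | (i : ℕ) + 1 < r} {i | 0 < (i : ℕ)}) (J : Set (Fin r)) (k : Fin r) :
    IsCPair s J {k}ᶜ := by
  refine isCPair_of_forall_notMem fun k' hk' => ?_
  rcases le_or_gt k k' with hle | hlt
  · refine .of_notMem_of_inter_Ioi_subset hcomm hk'
      (fun i hi => (hle.trans_lt hi.2).ne') ?_
    exact (isCPair_allButLast hcomm h2 hFV _).symm.of_subset_of_isCOn h1
      (inter_subset_right.trans (Iio_subset_allButLast k'))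
  · refine .of_notMem_of_inter_Iio_subset hcomm hk'
      (fun i hi => (hi.2.trans hlt).ne) ?_
    exact (isCPair_allButFirst hcomm h1 hFV _).symm.of_subset_of_isCOn h2
      (inter_subset_right.trans (Ioi_subset_allButFirst k'))

end StringGroup

theorem inf_eq_of_forall_lt_le_eq {α : Type*} [Lattice α] {a b c : α}
    (hmax : ∀ d, a < d → d ≤ b → d = b) (ha : a ≤ c ⊓ b) (hb : ¬ b ≤ c) : c ⊓ b = a := by
  by_contra hne
  exact hb (hmax _ (lt_of_le_of_ne ha (Ne.symm hne)) inf_le_right ▸ inf_le_left)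

/-- If `(G, {s₁,…,s_r})` is a string group generated by involutions such that
`G_{1,…,r-1}` and `G_{2,…,r}` are string C-groups, `s_r ∉ G_{1,…,r-1}` and `G_{2,…,r-1}`
is a maximal subgroup of `G_{2,…,r}`, then `(G, {s₁,…,s_r})` is a string C-group. -/
theorem stmt8 {G : Type*} [Group G] {r : ℕ} (hr : 1 ≤ r) (s : Fin r → G)
    (hcomm : ∀ i j : Fin r, (i : ℕ) + 2 ≤ (j : ℕ) ∨ (j : ℕ) + 2 ≤ (i : ℕ) →
      Commute (s i) (s j))
    (h1 : IsCOn s {i | (i : ℕ) + 1 < r})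
    (h2 : IsCOn s {i | 0 < (i : ℕ)})
    (hlast : s ⟨r - 1, by omega⟩ ∉ subJ s {i | (i : ℕ) + 1 < r})
    (hmax : subJ s ({i | (i : ℕ) + 1 < r} ∩ {i | 0 < (i : ℕ)}) < subJ s {i | 0 < (i : ℕ)} ∧
      ∀ K : Subgroup G, subJ s ({i | (i : ℕ) + 1 < r} ∩ {i | 0 < (i : ℕ)}) < K →
        K ≤ subJ s {i | 0 < (i : ℕ)} → K = subJ s {i | 0 < (i : ℕ)}) :
    IsCOn s Set.univ := by
  have hVF : ¬ subJ s {i | 0 < (i : ℕ)} ≤ subJ s {i | (i : ℕ) + 1 < r} := by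
    intro hle
    rcases Nat.lt_or_ge 1 r with hr2 | hr1
    · exact hlast (hle (Subgroup.subset_closure ⟨_, by simp only [mem_ofPred_eq]; omega, rfl⟩))
    · exact hmax.1.not_ge (subJ_mono fun i (hi : 0 < (i : ℕ)) => absurd i.isLt (by omega))
  have hFV : IsCPair s {i | (i : ℕ) + 1 < r} {i | 0 < (i : ℕ)} :=
    inf_eq_of_forall_lt_le_eq hmax.2 subJ_inter_le_inf hVF
  exact isCOn_univ_of_forall_isCPair_compl_singleton
    (isCPair_compl_singleton (fun i j h => hcomm i j (Or.inl h)) h1 h2 hFV)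
end
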